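/- arXiv:cs/0211042 — 2 statements merged into one kernel-verified Lean document; each statement's English description precedes it below -/
import Mathlib

section
/- For every instance r and every nonempty set S of finite instances (modeling a satisfiable set of integrity constraints as a nonempty set of finite sets over α), there exists a repair of r wrt S, i.e., an element r' ∈ S minimal with respect to the order ≤_r. -/
theorem stmt7 {α : Type*} [DecidableEq α] (r : Finset α)
    (S : Set (Finset α)) (hS : S.Nonempty) :
    ∃ r' ∈ S, ∀ r'' ∈ S, symmDiff r r'' ⊆ symmDiff r r' → r'' = r' := by
  have hne : {n | ∃ s ∈ S, (symmDiff r s).card = n}.Nonempty := by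
    obtain ⟨s, hs⟩ := hS
    exact ⟨_, s, hs, rfl⟩
  obtain ⟨r', hr', hcard⟩ := Nat.sInf_mem hne
  refine ⟨r', hr', fun r'' hr'' hsub => ?_⟩
  have hle : (symmDiff r r').card ≤ (symmDiff r r'').card := by
    rw [hcard]
    exact Nat.sInf_le ⟨r'', hr'', rfl⟩
  have heq : symmDiff r r'' = symmDiff r r' :=
    Finset.eq_of_subset_of_card_le hsub hle
  have := congrArg (fun t => symmDiff r t) heq
  simpa [symmDiff_symmDiff_cancel_left] using this
end

section
/- In a propositional (Boolean-valued) setting, the property that a tuple/fact q is a consistent answer wrt instance r and constraints (i.e., holds in all ≤_r-minimal elements of Mod) is non-monotone: there exist r ⊆ r⁺, a set Mod of instances, and a fact q such that q holds in all ≤_r-minimal elements of Mod but fails in some ≤_{r⁺}-minimal element of Mod. -/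
theorem stmt13 {α : Type*} [DecidableEq α] (a b : α) (hab : a ≠ b) :
    ∃ (r rplus : Finset α) (Mod : Set (Finset α)) (q : α),
      r ⊆ rplus ∧
      (∀ r' ∈ Mod,
        (∀ r'' ∈ Mod, symmDiff r r'' ⊆ symmDiff r r' → r'' = r') → q ∈ r') ∧
      (∃ r' ∈ Mod,
        (∀ r'' ∈ Mod, symmDiff rplus r'' ⊆ symmDiff rplus r' → r'' = r') ∧
        q ∉ r') := by
  refine ⟨{a}, {a, b}, {{a}, {b}}, a, ?_, ?_, ?_⟩
  · intro x hx
    simp only [Finset.mem_singleton] at hx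
    simp [hx]
  · rintro r' (rfl | rfl) hmin
    · simp
    · exfalso
      have h := hmin {a} (Or.inl rfl) (by
        intro x hx
        simp [Finset.mem_symmDiff] at hx)
      have : a ∈ ({b} : Finset α) := by rw [← h]; simp
      simp at this
      exact hab this
  · refine ⟨{b}, Or.inr rfl, ?_, ?_⟩
    · rintro r'' (rfl | rfl) hsub
      · exfalso
        have hb : b ∈ symmDiff ({a, b} : Finset α) {a} := by
          simp [Finset.mem_symmDiff, Ne.symm hab]
        have := hsub hb
        simp [Finset.mem_symmDiff, Ne.symm hab] at this
      · rfl
    · simp [hab]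
end
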